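/- arXiv:1609.03225 — 2 statements merged into one kernel-verified Lean document; each statement's English description precedes it below -/
import Mathlib

section
/- Let S be a nontrivial subsemigroup of (ℚ,+), let u, v be (possibly countably infinite) index sets, and let B be a u × v rational matrix with finitely many nonzero entries per row. Then there is a v × v rational matrix C (finitely many nonzero entries per row) such that {x ∈ (S \ {0})^v : B x = 0} = {C y : y ∈ (S \ {0})^v} ∩ (S \ {0})^v. Consequently B is kernel partition regular over S if and only if C is image partition regular over S. -/
open scoped BigOperators

/-- Matrix–vector product over ℚ, via `finsum`. -/
noncomputable def mulVecQ {u v : Type} (A : u → v → ℚ) (x : v → ℚ) : u → ℚ :=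
  fun i => ∑ᶠ j, A i j * x j

/-- `B` is kernel partition regular over `S`: for every finite colouring of
`S \ {0}` there is a monochromatic vector with entries in `S \ {0}` in the
kernel of `B`. -/
def KPRQ {u v : Type} (B : u → v → ℚ) (S : Set ℚ) : Prop :=
  ∀ (k : ℕ) (φ : ℚ → Fin k), ∃ x : v → ℚ,
    (∀ j, x j ∈ S \ {0}) ∧ (∀ i, mulVecQ B x i = 0) ∧
    (∀ j j', φ (x j) = φ (x j'))

/-- `C` is image partition regular over `S`: for every finite colouring of
`S \ {0}` there is `y` with entries in `S \ {0}` such that the entries of `C y`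
are monochromatic elements of `S \ {0}`. -/
def IPRQ {u v : Type} (C : u → v → ℚ) (S : Set ℚ) : Prop :=
  ∀ (k : ℕ) (φ : ℚ → Fin k), ∃ y : v → ℚ,
    (∀ j, y j ∈ S \ {0}) ∧ (∀ i, mulVecQ C y i ∈ S \ {0}) ∧
    (∀ i i', φ (mulVecQ C y i) = φ (mulVecQ C y i'))

/-
Let `R` be the span of the rows of `B` in the space `ℚ^(v)` of finitely supported functionals
and `p` a linear projection onto `R`. The row-finite matrix `C` whose `i`-th row is
`eᵢ - p eᵢ` has transpose `id - p`, so `⟨f, C y⟩ = ⟨f - p f, y⟩` for every functional `f`.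
Taking `f` a row of `B` gives `B (C y) = 0`; taking `f = eᵢ` and `x` in the kernel of `B`,
which is annihilated by `R ∋ p eᵢ`, gives `C x = x`. Hence `C` retracts onto the kernel of
`B`, which yields both the set equality and the equivalence of the two partition regularities.
-/

theorem Submodule.exists_isProj {K V : Type*} [DivisionRing K] [AddCommGroup V] [Module K V]
    (p : Submodule K V) : ∃ f : V →ₗ[K] V, LinearMap.IsProj p f := by
  obtain ⟨q, hpq⟩ := p.exists_isCompl
  exact ⟨p.subtype ∘ₗ p.projectionOnto q hpq, fun x => (p.projectionOnto q hpq x).2,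
    fun x hx => congrArg Subtype.val (Submodule.projectionOnto_apply_left hpq ⟨x, hx⟩)⟩

section MulVecQ

variable {u v : Type}

theorem finsum_mul_eq_linearCombination (f : v →₀ ℚ) (x : v → ℚ) :
    ∑ᶠ j, f j * x j = Finsupp.linearCombination ℚ x f := by
  rw [Finsupp.linearCombination_apply, Finsupp.sum]
  refine finsum_eq_sum_of_support_subset _ fun j hj => ?_
  simpa using left_ne_zero_of_mul hj

theorem mulVecQ_apply_eq_linearCombination {A : u → v → ℚ} {r : u → v →₀ ℚ}
    (hr : ∀ i, ⇑(r i) = A i) (x : v → ℚ) (i : u) :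
    mulVecQ A x i = Finsupp.linearCombination ℚ x (r i) := by
  rw [mulVecQ, ← hr, finsum_mul_eq_linearCombination]

theorem span_le_ker_linearCombination_of_mulVecQ_eq_zero {A : u → v → ℚ} {r : u → v →₀ ℚ}
    (hr : ∀ i, ⇑(r i) = A i) {x : v → ℚ} (hx : ∀ i, mulVecQ A x i = 0) :
    Submodule.span ℚ (Set.range r) ≤ LinearMap.ker (Finsupp.linearCombination ℚ x) := by
  rw [Submodule.span_le]
  rintro _ ⟨i, rfl⟩
  rw [SetLike.mem_coe, LinearMap.mem_ker, ← mulVecQ_apply_eq_linearCombination hr, hx]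

noncomputable def rowMatrix (T : (v →₀ ℚ) →ₗ[ℚ] v →₀ ℚ) : v → v → ℚ :=
  fun i => ⇑(T (Finsupp.single i 1))

theorem mulVecQ_rowMatrix_apply (T : (v →₀ ℚ) →ₗ[ℚ] v →₀ ℚ) (y : v → ℚ) (i : v) :
    mulVecQ (rowMatrix T) y i = Finsupp.linearCombination ℚ y (T (Finsupp.single i 1)) :=
  mulVecQ_apply_eq_linearCombination (fun _ => rfl) y i

theorem linearCombination_mulVecQ_rowMatrix (T : (v →₀ ℚ) →ₗ[ℚ] v →₀ ℚ) (y : v → ℚ)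
    (f : v →₀ ℚ) :
    Finsupp.linearCombination ℚ (mulVecQ (rowMatrix T) y) f =
      Finsupp.linearCombination ℚ y (T f) := by
  have hT : Finsupp.linearCombination ℚ (mulVecQ (rowMatrix T) y) =
      Finsupp.linearCombination ℚ y ∘ₗ T := by
    refine Finsupp.lhom_ext' fun i => LinearMap.ext_ring ?_
    simp [mulVecQ_rowMatrix_apply]
  exact LinearMap.congr_fun hT f

end MulVecQ

section KernelRetraction

variable {u v : Type}

structure IsKernelRetraction (B : u → v → ℚ) (C : v → v → ℚ) : Prop where
  mulVecQ_eq_self : ∀ x, (∀ i, mulVecQ B x i = 0) → mulVecQ C x = x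
  mulVecQ_mulVecQ_eq_zero : ∀ y i, mulVecQ B (mulVecQ C y) i = 0

namespace IsKernelRetraction

variable {B : u → v → ℚ} {C : v → v → ℚ}

theorem kernel_eq_image_inter (h : IsKernelRetraction B C) (S : Set ℚ) :
    {x : v → ℚ | (∀ j, x j ∈ S \ {0}) ∧ ∀ i, mulVecQ B x i = 0} =
      {x : v → ℚ | ∃ y : v → ℚ, (∀ j, y j ∈ S \ {0}) ∧ x = mulVecQ C y} ∩
        {x : v → ℚ | ∀ j, x j ∈ S \ {0}} := by
  ext x
  constructor
  · rintro ⟨hxS, hxB⟩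
    exact ⟨⟨x, hxS, (h.mulVecQ_eq_self x hxB).symm⟩, hxS⟩
  · rintro ⟨⟨y, -, rfl⟩, hxS⟩
    exact ⟨hxS, h.mulVecQ_mulVecQ_eq_zero y⟩

theorem kprq_iff_iprq (h : IsKernelRetraction B C) (S : Set ℚ) : KPRQ B S ↔ IPRQ C S := by
  constructor
  · intro hB k φ
    obtain ⟨x, hxS, hxB, hx⟩ := hB k φ
    have hCx := h.mulVecQ_eq_self x hxB
    exact ⟨x, hxS, by rwa [hCx], by rwa [hCx]⟩
  · intro hC k φ
    obtain ⟨y, hyS, hCyS, hCy⟩ := hC k φ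
    exact ⟨mulVecQ C y, hCyS, h.mulVecQ_mulVecQ_eq_zero y, hCy⟩

end IsKernelRetraction

theorem exists_isKernelRetraction (B : u → v → ℚ) (hB : ∀ i, (Function.support (B i)).Finite) :
    ∃ C : v → v → ℚ, (∀ i, (Function.support (C i)).Finite) ∧ IsKernelRetraction B C := by
  set r : u → v →₀ ℚ := fun i => Finsupp.ofSupportFinite (B i) (hB i)
  have hr : ∀ i, ⇑(r i) = B i := fun i => Finsupp.ofSupportFinite_coe
  obtain ⟨p, hp⟩ := (Submodule.span ℚ (Set.range r)).exists_isProj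
  refine ⟨rowMatrix (LinearMap.id - p), fun i => Finsupp.hasFiniteSupport _, ⟨?_, ?_⟩⟩
  · intro x hx
    funext i
    have hpx : Finsupp.linearCombination ℚ x (p (Finsupp.single i 1)) = 0 :=
      span_le_ker_linearCombination_of_mulVecQ_eq_zero hr hx (hp.map_mem _)
    simp [mulVecQ_rowMatrix_apply, hpx]
  · intro y i
    rw [mulVecQ_apply_eq_linearCombination hr, linearCombination_mulVecQ_rowMatrix,
      LinearMap.sub_apply, hp.map_id _ (Submodule.subset_span ⟨i, rfl⟩), LinearMap.id_apply,
      sub_self, map_zero]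

end KernelRetraction

theorem stmt4_general (S : AddSubsemigroup ℚ)
    {u v : Type}
    (B : u → v → ℚ) (hB : ∀ i, (Function.support (B i)).Finite) :
    ∃ C : v → v → ℚ,
      (∀ i, (Function.support (C i)).Finite) ∧
      ({x : v → ℚ | (∀ j, x j ∈ (S : Set ℚ) \ {0}) ∧ ∀ i, mulVecQ B x i = 0} =
        {x : v → ℚ | ∃ y : v → ℚ, (∀ j, y j ∈ (S : Set ℚ) \ {0}) ∧ x = mulVecQ C y} ∩
          {x : v → ℚ | ∀ j, x j ∈ (S : Set ℚ) \ {0}}) ∧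
      (KPRQ B (S : Set ℚ) ↔ IPRQ C (S : Set ℚ)) := by
  obtain ⟨C, hC, hCB⟩ := exists_isKernelRetraction B hB
  exact ⟨C, hC, hCB.kernel_eq_image_inter S, hCB.kprq_iff_iprq S⟩

/-- for a nontrivial subsemigroup `S` of `(ℚ,+)` and a `u × v`
rational matrix `B` (row-finite, `u, v` at most countable) there is a `v × v`
row-finite matrix `C` with
`{x ∈ (S \ {0})^v : B x = 0} = {C y : y ∈ (S \ {0})^v} ∩ (S \ {0})^v`;
consequently `B` is kernel partition regular over `S` iff `C` is image
partition regular over `S`. -/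
theorem stmt4 (S : AddSubsemigroup ℚ) (hS : ∃ s ∈ S, s ≠ (0 : ℚ))
    {u v : Type} [Countable u] [Countable v]
    (B : u → v → ℚ) (hB : ∀ i, (Function.support (B i)).Finite) :
    ∃ C : v → v → ℚ,
      (∀ i, (Function.support (C i)).Finite) ∧
      ({x : v → ℚ | (∀ j, x j ∈ (S : Set ℚ) \ {0}) ∧ ∀ i, mulVecQ B x i = 0} =
        {x : v → ℚ | ∃ y : v → ℚ, (∀ j, y j ∈ (S : Set ℚ) \ {0}) ∧ x = mulVecQ C y} ∩
          {x : v → ℚ | ∀ j, x j ∈ (S : Set ℚ) \ {0}}) ∧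
      (KPRQ B (S : Set ℚ) ↔ IPRQ C (S : Set ℚ)) :=
  stmt4_general S B hB
end

section
/- Let d ∈ ℕ with d ≥ 2, let A be the ω × 2 matrix with rows (1, ld) for l = 0, 1, 2, …, and let C be the ω × 2 matrix with rows (1 − ld, −1 + 2ld) for l = 0, 1, 2, …. Then {A x : x ∈ ℤ²} ∩ ℕ^ω = {C y : y ∈ ℕ²} ∩ ℕ^ω, where ℕ denotes the positive integers. -/
open scoped BigOperators

lemma mulVecQ_two (A : ℕ → Fin 2 → ℚ) (x : Fin 2 → ℚ) (l : ℕ) :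
    mulVecQ A x l = A l 0 * x 0 + A l 1 * x 1 := by
  simp [mulVecQ, finsum_eq_sum_of_fintype, Fin.sum_univ_two]

/-- let `d ≥ 2`, let `A` be the `ω × 2` matrix with rows
`(1, l·d)` and `C` the `ω × 2` matrix with rows `(1 − l·d, −1 + 2·l·d)`.
Then `{A x : x ∈ ℤ²} ∩ ℕ^ω = {C y : y ∈ ℕ²} ∩ ℕ^ω`, where ℕ denotes the
positive integers. -/
theorem stmt19 (d : ℕ) (hd : 2 ≤ d)
    (A C : ℕ → Fin 2 → ℚ)
    (hAdef : A = fun (l : ℕ) => ![1, (l : ℚ) * d])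
    (hCdef : C = fun (l : ℕ) => ![1 - (l : ℚ) * d, -1 + 2 * (l : ℚ) * d]) :
    {w : ℕ → ℚ | ∃ x : Fin 2 → ℚ, (∀ j, ∃ z : ℤ, x j = (z : ℚ)) ∧ w = mulVecQ A x} ∩
        {w : ℕ → ℚ | ∀ l, ∃ n : ℕ, 0 < n ∧ w l = (n : ℚ)} =
      {w : ℕ → ℚ | ∃ y : Fin 2 → ℚ, (∀ j, ∃ n : ℕ, 0 < n ∧ y j = (n : ℚ)) ∧ w = mulVecQ C y} ∩
        {w : ℕ → ℚ | ∀ l, ∃ n : ℕ, 0 < n ∧ w l = (n : ℚ)} := by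
  have hA : ∀ (x : Fin 2 → ℚ) (l : ℕ), mulVecQ A x l = x 0 + (l : ℚ) * d * x 1 := by
    intro x l; rw [mulVecQ_two, hAdef]; simp
  have hC : ∀ (y : Fin 2 → ℚ) (l : ℕ),
      mulVecQ C y l = (y 0 - y 1) + (l : ℚ) * d * (2 * y 1 - y 0) := by
    intro y l; rw [mulVecQ_two, hCdef]; simp; ring
  ext w
  simp only [Set.mem_inter_iff, Set.mem_setOf_eq]
  constructor
  · rintro ⟨⟨x, hx, rfl⟩, hpos⟩
    refine ⟨?_, hpos⟩
    obtain ⟨z0, hz0⟩ := hx 0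
    obtain ⟨z1, hz1⟩ := hx 1
    -- x 0 ≥ 1
    obtain ⟨n0, hn0pos, hn0⟩ := hpos 0
    have hx0 : (1 : ℚ) ≤ x 0 := by
      rw [hA x 0] at hn0
      simp at hn0
      rw [hn0]
      exact_mod_cast hn0pos
    -- x 1 ≥ 0
    have hx1 : (0 : ℚ) ≤ x 1 := by
      by_contra hneg
      push_neg at hneg
      have hz1neg : z1 ≤ -1 := by
        rw [hz1] at hneg
        have : z1 < 0 := by exact_mod_cast hneg
        omega
      have hz0ge : 1 ≤ z0 := by rw [hz0] at hx0; exact_mod_cast hx0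
      obtain ⟨n, hnpos, hn⟩ := hpos z0.toNat
      have hval : mulVecQ A x z0.toNat = x 0 + (z0.toNat : ℚ) * d * x 1 := hA x z0.toNat
      have hcast : ((z0.toNat : ℕ) : ℚ) = (z0 : ℚ) := by
        have ht : ((z0.toNat : ℤ)) = z0 := Int.toNat_of_nonneg (by omega)
        exact_mod_cast congrArg (Int.cast : ℤ → ℚ) ht
      have hle : mulVecQ A x z0.toNat ≤ (z0 : ℚ) * (1 - d) := by
        rw [hval, hcast, hz0, hz1]
        have hd2 : (2 : ℚ) ≤ d := by exact_mod_cast hd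
        have : (z0 : ℚ) * d * (z1 : ℚ) ≤ (z0 : ℚ) * d * (-1) := by
          apply mul_le_mul_of_nonneg_left
          · exact_mod_cast hz1neg
          · positivity
        nlinarith [hz0ge, (by exact_mod_cast hz0ge : (1:ℚ) ≤ (z0:ℚ))]
      have hwneg : mulVecQ A x z0.toNat ≤ 0 := by
        have hd2 : (2 : ℚ) ≤ d := by exact_mod_cast hd
        have h1 : (1:ℚ) ≤ (z0:ℚ) := by exact_mod_cast hz0ge
        nlinarith
      rw [hn] at hwneg
      have : (0:ℚ) < n := by exact_mod_cast hnpos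
      linarith
    -- build y
    refine ⟨![2 * x 0 + x 1, x 0 + x 1], ?_, ?_⟩
    · intro j
      fin_cases j
      · refine ⟨(2 * z0 + z1).toNat, ?_, ?_⟩
        · have h1 : 1 ≤ z0 := by rw [hz0] at hx0; exact_mod_cast hx0
          have h2 : 0 ≤ z1 := by rw [hz1] at hx1; exact_mod_cast hx1
          omega
        · have h1 : 1 ≤ z0 := by rw [hz0] at hx0; exact_mod_cast hx0
          have h2 : 0 ≤ z1 := by rw [hz1] at hx1; exact_mod_cast hx1
          have ht : (((2 * z0 + z1).toNat : ℤ)) = 2 * z0 + z1 := Int.toNat_of_nonneg (by omega)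
          have : ((2 * z0 + z1).toNat : ℚ) = ((2 * z0 + z1 : ℤ) : ℚ) :=
            congrArg (Int.cast : ℤ → ℚ) ht
          simp [this, hz0, hz1]
      · refine ⟨(z0 + z1).toNat, ?_, ?_⟩
        · have h1 : 1 ≤ z0 := by rw [hz0] at hx0; exact_mod_cast hx0
          have h2 : 0 ≤ z1 := by rw [hz1] at hx1; exact_mod_cast hx1
          omega
        · have h1 : 1 ≤ z0 := by rw [hz0] at hx0; exact_mod_cast hx0
          have h2 : 0 ≤ z1 := by rw [hz1] at hx1; exact_mod_cast hx1
          have ht : (((z0 + z1).toNat : ℤ)) = z0 + z1 := Int.toNat_of_nonneg (by omega)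
          have : ((z0 + z1).toNat : ℚ) = ((z0 + z1 : ℤ) : ℚ) :=
            congrArg (Int.cast : ℤ → ℚ) ht
          simp [this, hz0, hz1]
    · funext l
      rw [hC, hA]
      simp
      ring_nf
  · rintro ⟨⟨y, hy, rfl⟩, hpos⟩
    refine ⟨?_, hpos⟩
    obtain ⟨n0, _, hn0⟩ := hy 0
    obtain ⟨n1, _, hn1⟩ := hy 1
    refine ⟨![y 0 - y 1, 2 * y 1 - y 0], ?_, ?_⟩
    · intro j
      fin_cases j
      · exact ⟨(n0 : ℤ) - n1, by simp [hn0, hn1]⟩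
      · exact ⟨2 * (n1 : ℤ) - n0, by push_cast; simp [hn0, hn1]⟩
    · funext l
      rw [hA, hC]
      simp
end
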